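/- For 1 ≤ i ≤ n−1 and i < x ≤ n, define A(i,x) ⊆ Q_n as the union of: {(j,j+1) : 1 ≤ j ≤ i−1}; {(i,x), (i+1,x)}; {(i,k) : i+1 ≤ k ≤ x−1, k ≡ i+1 (mod 2)}; {(i+1,ℓ) : i+2 ≤ ℓ ≤ x−1, ℓ ≡ i (mod 2)}; and the tail {(i,k) : x+1 ≤ k ≤ n} if x ≡ i (mod 2), or {(i+1,k) : x+1 ≤ k ≤ n} if x ≢ i (mod 2). Then each A(i,x) is an antichain of cardinality n in (Q_n, ≺), and every antichain of cardinality n in (Q_n, ≺) equals {(1,k) : 1 ≤ k ≤ n} or equals A(i,x) for some such pair (i,x). -/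

import Mathlib

/-- Membership in `Q_n`: pairs `(i,k)` with `1 ≤ i ≤ k ≤ n`. -/
def Qmem (n : ℕ) (p : ℕ × ℕ) : Prop := 1 ≤ p.1 ∧ p.1 ≤ p.2 ∧ p.2 ≤ n

/-- The relation `≺₀` on `Q_n`. -/
def prec0 (n : ℕ) (p q : ℕ × ℕ) : Prop :=
  Qmem n p ∧ Qmem n q ∧ q.1 = p.1 + 1 ∧
  ( p.2 = p.1 ∨
    (∃ k : ℕ, 1 ≤ k ∧ p.2 = p.1 + 2 * k ∧ ∃ l < k, q.2 = p.1 + 1 + 2 * l) ∨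
    (∃ k : ℕ, 1 ≤ k ∧ p.2 = p.1 + 2 * k ∧ p.1 + 2 * k + 1 ≤ q.2) ∨
    (∃ k : ℕ, 1 ≤ k ∧ p.2 = p.1 + 2 * k + 1 ∧ ∃ l < k, q.2 = p.1 + 1 + 2 * l) )

/-- The relation `≺`, the transitive closure of `≺₀`. -/
def prec (n : ℕ) : ℕ × ℕ → ℕ × ℕ → Prop := Relation.TransGen (prec0 n)

/-- An antichain in `(Q_n, ≺)`: a subset of `Q_n` no two distinct elements
of which are related by `≺` (in either direction). -/
def IsPrecAntichain (n : ℕ) (A : Set (ℕ × ℕ)) : Prop :=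
  (∀ p ∈ A, Qmem n p) ∧ ∀ p ∈ A, ∀ q ∈ A, p ≠ q → ¬ prec n p q

/-- The antichain `A(i,x)` of the paper (candidate generalized tilting module in the
`i`-th tier): `{(j,j+1) : 1 ≤ j ≤ i-1} ∪ {(i,x),(i+1,x)}`, together with the elements
`(i,k)` for `i+1 ≤ k ≤ x-1` with `k ≡ i+1 (mod 2)`, the elements `(i+1,ℓ)` for
`i+2 ≤ ℓ ≤ x-1` with `ℓ ≡ i (mod 2)`, and the tail `(i,k)` (resp. `(i+1,k)`) for
`x+1 ≤ k ≤ n` when `x ≡ i (mod 2)` (resp. `x ≢ i (mod 2)`). -/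
def Afam (n i x : ℕ) : Set (ℕ × ℕ) :=
  {p : ℕ × ℕ | p.2 = p.1 + 1 ∧ 1 ≤ p.1 ∧ p.1 < i} ∪
  {(i, x), (i + 1, x)} ∪
  {p : ℕ × ℕ | p.1 = i ∧ i + 1 ≤ p.2 ∧ p.2 < x ∧ p.2 % 2 = (i + 1) % 2} ∪
  {p : ℕ × ℕ | p.1 = i + 1 ∧ i + 2 ≤ p.2 ∧ p.2 < x ∧ p.2 % 2 = i % 2} ∪
  (if x % 2 = i % 2 then {p : ℕ × ℕ | p.1 = i ∧ x + 1 ≤ p.2 ∧ p.2 ≤ n}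
   else {p : ℕ × ℕ | p.1 = i + 1 ∧ x + 1 ≤ p.2 ∧ p.2 ≤ n})


/-!
The relation only joins adjacent rows, and there it is explicit (`prec0_iff`):
`(i,k) ≺₀ (i+1,ℓ)` iff `ℓ < k` with `ℓ - i` odd, or `k < ℓ` with `k - i` even. The elements
`(j,j+1)` have no successors, and every other element lies below everything two rows higher.
So in an antichain with top row `i+1`, the rows below `i` hold only elements `(j,j+1)` and
`(i,i)` is excluded; all second coordinates then lie in `[2,n]`, and an antichain of size `n`
contains two elements with a common second coordinate `x`, necessarily `(i,x)` and `(i+1,x)`.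
Incomparability with these two confines the antichain to `A(i,x)`, which has exactly `n`
elements.
-/

theorem prec0_iff {n : ℕ} {p q : ℕ × ℕ} :
    prec0 n p q ↔ Qmem n p ∧ Qmem n q ∧ q.1 = p.1 + 1 ∧
      ((q.2 < p.2 ∧ q.2 % 2 ≠ p.1 % 2) ∨ (p.2 < q.2 ∧ p.2 % 2 = p.1 % 2)) := by
  refine ⟨fun ⟨hp, hq, hrow, h⟩ ↦ ⟨hp, hq, hrow, ?_⟩, fun ⟨hp, hq, hrow, h⟩ ↦ ⟨hp, hq, hrow, ?_⟩⟩
  · have := hp.2.1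
    have := hq.2.1
    rcases h with h | ⟨k, -, h, l, hl, h'⟩ | ⟨k, hk, h, h'⟩ | ⟨k, -, h, l, hl, h'⟩ <;> omega
  · have := hp.2.1
    have := hq.2.1
    rcases h with ⟨hlt, hpar⟩ | ⟨hlt, hpar⟩
    · by_cases hd : p.2 % 2 = p.1 % 2
      · exact Or.inr <| Or.inl ⟨(p.2 - p.1) / 2, by omega, by omega,
          (q.2 - p.1 - 1) / 2, by omega, by omega⟩
      · exact Or.inr <| Or.inr <| Or.inr ⟨(p.2 - p.1) / 2, by omega, by omega,
          (q.2 - p.1 - 1) / 2, by omega, by omega⟩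
    · by_cases hd : p.2 = p.1
      · exact Or.inl hd
      · exact Or.inr <| Or.inr <| Or.inl ⟨(p.2 - p.1) / 2, by omega, by omega, by omega⟩

theorem prec.fst_lt {n : ℕ} {p q : ℕ × ℕ} (h : prec n p q) : p.1 < q.1 := by
  induction h with
  | single h => have := h.2.2.1; omega
  | tail _ h ih => have := h.2.2.1; omega

theorem prec.snd_ne_fst_add_one {n : ℕ} {p q : ℕ × ℕ} (h : prec n p q) : p.2 ≠ p.1 + 1 := by
  obtain ⟨r, hr, -⟩ := Relation.TransGen.head'_iff.1 h
  obtain ⟨-, hr, hrow, hrel⟩ := prec0_iff.1 hr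
  have := hr.2.1
  omega

theorem prec.prec0_of_fst_eq {n : ℕ} {p q : ℕ × ℕ} (h : prec n p q) (hrow : q.1 = p.1 + 1) :
    prec0 n p q := by
  cases h with
  | single h => exact h
  | tail h h' => have := prec.fst_lt (n := n) h; have := h'.2.2.1; omega

theorem prec_diag_of_lt {n r : ℕ} {q : ℕ × ℕ} (hq : Qmem n q) (hr : 1 ≤ r) (hrq : r < q.1) :
    prec n (r, r) q := by
  obtain ⟨d, hd⟩ : ∃ d, q.1 = r + d + 1 := ⟨q.1 - r - 1, by omega⟩
  have := hq.2.1
  have := hq.2.2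
  induction d generalizing r with
  | zero => exact .single (prec0_iff.2 ⟨⟨hr, le_rfl, by omega⟩, hq, by simp [hd], by omega⟩)
  | succ d ih =>
    refine .head (prec0_iff.2 ⟨⟨hr, le_rfl, by omega⟩, ⟨by omega, le_rfl, by omega⟩, rfl, ?_⟩)
      (ih (by omega) (by omega) (by omega))
    simp

theorem prec_of_fst_add_two_le {n : ℕ} {p q : ℕ × ℕ} (hp : Qmem n p) (hq : Qmem n q)
    (hfree : p.2 ≠ p.1 + 1) (hrow : p.1 + 2 ≤ q.1) : prec n p q := by
  obtain ⟨h1, h2, h3⟩ := hp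
  have := hq.2.1
  have := hq.2.2
  have hstep : prec0 n p (p.1 + 1, p.1 + 1) :=
    prec0_iff.2 ⟨⟨h1, h2, h3⟩, ⟨by omega, le_rfl, by omega⟩, rfl, by omega⟩
  exact .head hstep (prec_diag_of_lt hq (by omega) (by omega))

theorem setOf_qmem_finite (n : ℕ) : {p : ℕ × ℕ | Qmem n p}.Finite :=
  ((Set.finite_Iic n).prod (Set.finite_Iic n)).subset fun _ ⟨_, h, h'⟩ ↦ ⟨h.trans h', h'⟩

theorem rowOne_eq_prod (n : ℕ) :
    {p : ℕ × ℕ | p.1 = 1 ∧ 1 ≤ p.2 ∧ p.2 ≤ n} = {1} ×ˢ Set.Icc 1 n := by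
  ext p
  simp

theorem mem_Afam {n i x : ℕ} {p : ℕ × ℕ} :
    p ∈ Afam n i x ↔
      (p.2 = p.1 + 1 ∧ 1 ≤ p.1 ∧ p.1 < i) ∨
      (p.1 = i ∧ p.2 = x) ∨ (p.1 = i + 1 ∧ p.2 = x) ∨
      (p.1 = i ∧ i + 1 ≤ p.2 ∧ p.2 < x ∧ p.2 % 2 = (i + 1) % 2) ∨
      (p.1 = i + 1 ∧ i + 2 ≤ p.2 ∧ p.2 < x ∧ p.2 % 2 = i % 2) ∨
      (x % 2 = i % 2 ∧ p.1 = i ∧ x + 1 ≤ p.2 ∧ p.2 ≤ n) ∨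
      (x % 2 ≠ i % 2 ∧ p.1 = i + 1 ∧ x + 1 ≤ p.2 ∧ p.2 ≤ n) := by
  unfold Afam
  by_cases hx : x % 2 = i % 2 <;>
    simp only [hx, Set.mem_union, Set.mem_insert_iff, Set.mem_singleton_iff, Set.mem_ofPred_eq,
      Prod.ext_iff, if_true, if_false, ne_eq, not_true, not_false_iff, true_and, false_and,
      or_false, false_or, or_assoc]

theorem qmem_of_mem_Afam {n i x : ℕ} (hi : 1 ≤ i) (hix : i < x) (hxn : x ≤ n)
    {p : ℕ × ℕ} (hp : p ∈ Afam n i x) : Qmem n p := by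
  rw [mem_Afam] at hp
  refine ⟨?_, ?_, ?_⟩ <;> omega

theorem isPrecAntichain_Afam {n i x : ℕ} (hi : 1 ≤ i) (hix : i < x) (hxn : x ≤ n) :
    IsPrecAntichain n (Afam n i x) := by
  refine ⟨fun p hp ↦ qmem_of_mem_Afam hi hix hxn hp, fun p hp q hq _ h ↦ ?_⟩
  have := h.fst_lt
  have := h.snd_ne_fst_add_one
  rw [mem_Afam] at hp hq
  obtain ⟨-, -, -, hrel⟩ := prec0_iff.1 (h.prec0_of_fst_eq (by omega))
  omega

theorem image_snd_Afam_diff {n i x : ℕ} (hi : 1 ≤ i) (hix : i < x) (hxn : x ≤ n) :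
    Prod.snd '' (Afam n i x \ {(i, x)}) = Set.Icc 2 n := by
  ext v
  constructor
  · rintro ⟨p, ⟨hp, hp'⟩, rfl⟩
    simp only [Set.mem_singleton_iff, Prod.ext_iff] at hp'
    rw [mem_Afam] at hp
    simp only [Set.mem_Icc]
    omega
  · intro hv
    simp only [Set.mem_Icc] at hv
    have : ∃ a, (a, v) ∈ Afam n i x ∧ (a, v) ≠ (i, x) := by
      simp only [mem_Afam, ne_eq, Prod.ext_iff]
      by_cases h : v ≤ i
      · exact ⟨v - 1, by omega⟩
      by_cases h' : (v < x ∧ v % 2 = (i + 1) % 2) ∨ (x < v ∧ x % 2 = i % 2)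
      · exact ⟨i, by omega⟩
      · exact ⟨i + 1, by omega⟩
    obtain ⟨a, ha⟩ := this
    exact ⟨(a, v), ha, rfl⟩

theorem ncard_Afam {n i x : ℕ} (hi : 1 ≤ i) (hix : i < x) (hxn : x ≤ n) :
    (Afam n i x).ncard = n := by
  have hmem : (i, x) ∈ Afam n i x := mem_Afam.2 (by simp)
  have hfin : (Afam n i x).Finite :=
    (setOf_qmem_finite n).subset fun p hp ↦ qmem_of_mem_Afam hi hix hxn hp
  -- `(i, x)` is the one element of `Afam n i x` whose second coordinate is shared
  have hinj : Set.InjOn Prod.snd (Afam n i x \ {(i, x)}) := by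
    rintro p ⟨hp, hp'⟩ q ⟨hq, hq'⟩ h
    simp only [Set.mem_singleton_iff, Prod.ext_iff] at hp' hq'
    rw [mem_Afam] at hp hq
    exact Prod.ext (by omega) h
  rw [← Set.ncard_sdiff_singleton_add_one hmem hfin, ← hinj.ncard_image,
    image_snd_Afam_diff hi hix hxn, Set.ncard_Icc_nat]
  omega

namespace IsPrecAntichain

variable {n : ℕ} {A : Set (ℕ × ℕ)}

theorem not_prec0_cond (hA : IsPrecAntichain n A) {p q : ℕ × ℕ} (hp : p ∈ A) (hq : q ∈ A)
    (hrow : q.1 = p.1 + 1) :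
    ¬((q.2 < p.2 ∧ q.2 % 2 ≠ p.1 % 2) ∨ (p.2 < q.2 ∧ p.2 % 2 = p.1 % 2)) := fun h ↦
  hA.2 p hp q hq (by rintro rfl; omega) (.single (prec0_iff.2 ⟨hA.1 p hp, hA.1 q hq, hrow, h⟩))

theorem snd_eq_of_fst_add_two_le (hA : IsPrecAntichain n A) {p q : ℕ × ℕ} (hp : p ∈ A)
    (hq : q ∈ A) (hrow : p.1 + 2 ≤ q.1) : p.2 = p.1 + 1 := by
  by_contra hfree
  exact hA.2 p hp q hq (by rintro rfl; omega)
    (prec_of_fst_add_two_le (hA.1 p hp) (hA.1 q hq) hfree hrow)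

theorem mem_cases_of_top (hA : IsPrecAntichain n A) {i : ℕ} {q : ℕ × ℕ} (hq : q ∈ A)
    (hqi : q.1 = i + 1) (htop : ∀ p ∈ A, p.1 ≤ q.1) {p : ℕ × ℕ} (hp : p ∈ A) :
    1 ≤ p.1 ∧ p.2 ≤ n ∧
      ((p.1 < i ∧ p.2 = p.1 + 1) ∨ ((p.1 = i ∨ p.1 = i + 1) ∧ i < p.2)) := by
  obtain ⟨hp1, hp12, hp2⟩ := hA.1 p hp
  have := (hA.1 q hq).2.1
  have := htop p hp
  refine ⟨hp1, hp2, ?_⟩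
  rcases lt_or_ge p.1 i with hlt | hge
  · exact Or.inl ⟨hlt, hA.snd_eq_of_fst_add_two_le hp hq (by omega)⟩
  · have := hA.not_prec0_cond hp hq
    omega

theorem subset_Afam (hA : IsPrecAntichain n A) {i x : ℕ} {q : ℕ × ℕ} (hq : q ∈ A)
    (hqi : q.1 = i + 1) (htop : ∀ p ∈ A, p.1 ≤ q.1) (hx : (i, x) ∈ A) (hx' : (i + 1, x) ∈ A) :
    A ⊆ Afam n i x := by
  rintro ⟨a, b⟩ hp
  have hxn := (hA.1 _ hx).2.2
  rw [mem_Afam]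
  dsimp only
  obtain ⟨ha, hbn, hfree | ⟨rfl | rfl, hib⟩⟩ := hA.mem_cases_of_top hq hqi htop hp
  · omega
  · have := hA.not_prec0_cond hp hx' rfl
    dsimp only at this
    omega
  · have := hA.not_prec0_cond hx hp rfl
    dsimp only at this
    omega

end IsPrecAntichain

theorem exists_mem_and_mem_of_ncard_eq {n i : ℕ} {A : Set (ℕ × ℕ)} (hn : 1 ≤ n) (hi : 1 ≤ i)
    (hcard : A.ncard = n)
    (hA : ∀ p ∈ A, 1 ≤ p.1 ∧ p.2 ≤ n ∧
      ((p.1 < i ∧ p.2 = p.1 + 1) ∨ ((p.1 = i ∨ p.1 = i + 1) ∧ i < p.2))) :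
    ∃ x, (i, x) ∈ A ∧ (i + 1, x) ∈ A := by
  have hmaps : ∀ p ∈ A, p.2 ∈ Set.Icc 2 n := fun p hp ↦ by
    have := hA p hp
    exact ⟨by omega, by omega⟩
  obtain ⟨⟨a, b⟩, hp, ⟨c, d⟩, hq, hne, hbd : b = d⟩ :=
    Set.exists_ne_map_eq_of_ncard_lt_of_maps_to (by rw [Set.ncard_Icc_nat]; omega) hmaps
  subst hbd
  have := hA _ hp
  have := hA _ hq
  simp only [ne_eq, Prod.mk.injEq, and_true] at hne this
  obtain ⟨rfl, rfl⟩ | ⟨rfl, rfl⟩ : (a = i ∧ c = i + 1) ∨ (a = i + 1 ∧ c = i) := by omega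
  exacts [⟨b, hp, hq⟩, ⟨b, hq, hp⟩]

/-- each `A(i,x)` is an antichain of cardinality `n` in `(Q_n, ≺)`, and
every antichain of cardinality `n` equals `{(1,k) : 1 ≤ k ≤ n}` or some `A(i,x)`. -/
theorem classification_of_antichains (n : ℕ) (hn : 2 ≤ n) :
    (∀ i x : ℕ, 1 ≤ i → i ≤ n - 1 → i < x → x ≤ n →
      IsPrecAntichain n (Afam n i x) ∧ (Afam n i x).ncard = n) ∧
    (∀ A : Set (ℕ × ℕ), IsPrecAntichain n A → A.ncard = n →
      A = {p : ℕ × ℕ | p.1 = 1 ∧ 1 ≤ p.2 ∧ p.2 ≤ n} ∨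
        ∃ i x : ℕ, 1 ≤ i ∧ i ≤ n - 1 ∧ i < x ∧ x ≤ n ∧ A = Afam n i x) := by
  refine ⟨fun i x hi _ hix hxn ↦ ⟨isPrecAntichain_Afam hi hix hxn, ncard_Afam hi hix hxn⟩,
    fun A hA hcard ↦ ?_⟩
  obtain ⟨q, hq, htop⟩ := Set.exists_max_image A Prod.fst
    ((setOf_qmem_finite n).subset hA.1) (Set.nonempty_of_ncard_ne_zero (by omega))
  obtain ⟨hq1, -, -⟩ := hA.1 q hq
  by_cases hrow : q.1 = 1
  · left
    refine Set.eq_of_subset_of_ncard_le (fun p hp ↦ ?_) ?_ ?_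
    · obtain ⟨hp1, hp12, hp2⟩ := hA.1 p hp
      exact ⟨by have := htop p hp; omega, by omega, hp2⟩
    · rw [rowOne_eq_prod, Set.ncard_prod, hcard]
      simp
    · rw [rowOne_eq_prod]
      exact (Set.finite_singleton 1).prod (Set.finite_Icc 1 n)
  · right
    obtain ⟨i, hqi⟩ : ∃ i, q.1 = i + 1 := ⟨q.1 - 1, by omega⟩
    obtain ⟨x, hx, hx'⟩ := exists_mem_and_mem_of_ncard_eq (by omega) (by omega) hcard
      fun p hp ↦ hA.mem_cases_of_top hq hqi htop hp
    obtain ⟨-, hxn, hix⟩ := hA.mem_cases_of_top hq hqi htop hx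
    refine ⟨i, x, by omega, by omega, by omega, hxn, ?_⟩
    exact Set.eq_of_subset_of_ncard_le (hA.subset_Afam hq hqi htop hx hx')
      (by rw [ncard_Afam (by omega) (by omega) hxn, hcard])
      ((setOf_qmem_finite n).subset fun p hp ↦ qmem_of_mem_Afam (by omega) (by omega) hxn hp)
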